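/- arXiv:2508.06679 — 3 statements merged into one kernel-verified Lean document; each statement's English description precedes it below -/
import Mathlib

section
/- Let G be a topological group and let H ≤ H' be subgroups of G with finite index [H' : H] < ∞. Suppose that for every neighborhood U of the identity in G there exist a finite set F ⊆ G and n ∈ ℕ such that H ⊆ (F·U)ⁿ (the n-fold setwise product of F·U). Then for every neighborhood U of the identity there exist a finite set F' ⊆ G and n ∈ ℕ such that H' ⊆ (F'·U)ⁿ. -/
open Pointwise

/-- If `H ≤ H'` are subgroups of a topological group `G` with `[H' : H] < ∞`
and `H` satisfies the Rosendal boundedness criterion (for every identity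
neighborhood `U` there are a finite set `F` and `n` with `H ⊆ (F * U) ^ n`),
then `H'` satisfies the Rosendal boundedness criterion as well. -/
theorem finiteIndex_extension_coarselyBounded
    {G : Type*} [Group G] [TopologicalSpace G] [IsTopologicalGroup G]
    (H H' : Subgroup G) (hle : H ≤ H') (hfin : H.relIndex H' ≠ 0)
    (hH : ∀ U ∈ nhds (1 : G), ∃ F : Set G, F.Finite ∧
      ∃ n : ℕ, (H : Set G) ⊆ (F * U) ^ n) :
    ∀ U ∈ nhds (1 : G), ∃ F' : Set G, F'.Finite ∧
      ∃ n : ℕ, (H' : Set G) ⊆ (F' * U) ^ n := by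
  intro U hU
  obtain ⟨F, hF, n, hHn⟩ := hH U hU
  have h1 : (1 : G) ∈ U := mem_of_mem_nhds hU
  haveI : Finite (H' ⧸ H.subgroupOf H') := (Nat.card_ne_zero.mp hfin).2
  set T : Set G :=
    Set.range (fun q : H' ⧸ H.subgroupOf H' => ((Quotient.out q : H') : G)) with hT
  refine ⟨T ∪ F, (Set.finite_range _).union hF, n + 1, ?_⟩
  intro x hx
  set q : H' ⧸ H.subgroupOf H' := QuotientGroup.mk ⟨x, hx⟩ with hq
  set t : H' := Quotient.out q with ht
  have hmk : (QuotientGroup.mk t : H' ⧸ H.subgroupOf H') = QuotientGroup.mk (⟨x, hx⟩ : H') := by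
    rw [ht, hq]; exact Quotient.out_eq' _
  have hmem : t⁻¹ * ⟨x, hx⟩ ∈ H.subgroupOf H' := (QuotientGroup.eq).mp hmk
  have hmem' : (↑t)⁻¹ * x ∈ (H : Set G) := hmem
  have hpow : (↑t)⁻¹ * x ∈ ((T ∪ F) * U) ^ n :=
    Set.pow_subset_pow_left (Set.mul_subset_mul_right Set.subset_union_right)
      (hHn hmem')
  have htmem : (t : G) ∈ (T ∪ F) * U := by
    have : (t : G) ∈ T := ⟨q, rfl⟩
    simpa using Set.mul_mem_mul (Set.mem_union_left F this) h1
  have : x = (t : G) * ((↑t)⁻¹ * x) := by group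
  rw [this, pow_succ']
  exact Set.mul_mem_mul htmem hpow
end

section
/- Let G be a group acting on a set V by automorphisms of a simple graph Γ on V (i.e., Γ.Adj u v implies Γ.Adj (g·u) (g·v) for all g ∈ G), with the action transitive on V. Fix x ∈ V, let ν := {g ∈ G : g·x = x} be the stabilizer of x, and suppose F ⊆ G is a set such that whenever g·x and k·x are adjacent in Γ, one has g⁻¹k ∈ ν·F·ν (setwise product). Then for every g ∈ G and m ∈ ℕ, if x and g·x are connected in Γ and the graph distance from x to g·x equals m, then g ∈ (ν·F·ν)ᵐ · ν, where (ν·F·ν)ᵐ denotes the m-fold setwise product (with the 0-fold product equal to {1}). -/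
open Pointwise

/-- Let `G` act on the vertex set of a simple graph `Γ` by graph automorphisms,
transitively on vertices.  Fix `x` with stabilizer `ν`, and suppose `F ⊆ G` is
such that whenever `g • x` and `k • x` are adjacent, `g⁻¹ * k ∈ ν * F * ν`.
Then any `g` with `d_Γ (x, g • x) = m` lies in `(ν * F * ν) ^ m * ν`. -/
theorem ball_preimage_subset_product
    {G V : Type*} [Group G] [MulAction G V] (Γ : SimpleGraph V)
    (haut : ∀ (g : G) (u v : V), Γ.Adj u v → Γ.Adj (g • u) (g • v))
    (htrans : ∀ u v : V, ∃ g : G, g • u = v)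
    (x : V) (ν : Set G) (hν : ν = {g : G | g • x = x})
    (F : Set G)
    (hF : ∀ g k : G, Γ.Adj (g • x) (k • x) → g⁻¹ * k ∈ ν * F * ν) :
    ∀ (g : G) (m : ℕ), Γ.Reachable x (g • x) → Γ.dist x (g • x) = m →
      g ∈ (ν * F * ν) ^ m * ν := by
  intro g m
  induction m generalizing g with
  | zero =>
    intro hr hd
    have hx : x = g • x := (hr.dist_eq_zero_iff).mp hd
    rw [pow_zero, one_mul, hν]
    exact hx.symm
  | succ n ih =>
    intro hr hd
    obtain ⟨p, hp⟩ := hr.exists_walk_length_eq_dist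
    rw [hd] at hp
    -- reverse walk starts at g • x
    have hp' : p.reverse.length = n + 1 := by rw [SimpleGraph.Walk.length_reverse, hp]
    have hne : g • x ≠ x := by
      intro h
      rw [SimpleGraph.dist_comm] at hd
      rw [h, SimpleGraph.dist_self] at hd
      omega
    obtain ⟨y, hadj, q, hq⟩ := SimpleGraph.Walk.exists_eq_cons_of_ne hne p.reverse
    rw [hq, SimpleGraph.Walk.length_cons] at hp'
    replace hp' : q.length = n := by omega
    -- hadj : Γ.Adj (g • x) y, q : Walk y x, q.length = n
    obtain ⟨k, hk⟩ := htrans x y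
    subst hk
    have hry : Γ.Reachable x (k • x) := ⟨q.reverse⟩
    have hdy_le : Γ.dist x (k • x) ≤ n := by
      have := Γ.dist_le q.reverse
      rwa [SimpleGraph.Walk.length_reverse, hp'] at this
    have hdy_ge : n ≤ Γ.dist x (k • x) := by
      obtain ⟨w, hw⟩ := hry.exists_walk_length_eq_dist
      have := Γ.dist_le (w.concat hadj.symm)
      rw [SimpleGraph.Walk.length_concat, hw, hd] at this
      omega
    have hdy : Γ.dist x (k • x) = n := le_antisymm hdy_le hdy_ge
    obtain ⟨p₁, hp₁, q₁, hq₁, hpq⟩ := ih k hry hdy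
    have hmem : k⁻¹ * g ∈ ν * F * ν := hF k g hadj.symm
    obtain ⟨c, hc, b, hb, hcb⟩ := hmem
    obtain ⟨a, ha, f, hf, haf⟩ := hc
    -- g = k * (k⁻¹ g) = p₁ * q₁ * a * f * b
    refine ⟨p₁ * ((q₁ * a) * f * b), ?_, 1, ?_, ?_⟩
    · rw [pow_succ]
      refine Set.mul_mem_mul hp₁ ?_
      refine Set.mul_mem_mul (Set.mul_mem_mul ?_ hf) hb
      have : q₁ * a ∈ ν := by
        rw [hν] at ha hq₁ ⊢
        simp only [Set.mem_setOf_eq] at *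
        rw [mul_smul, ha, hq₁]
      exact this
    · rw [hν]; simp
    · simp only at hpq hcb haf ⊢
      subst hpq haf
      have hg : g = p₁ * q₁ * (a * f * b) := by rw [hcb]; group
      rw [hg]; group
end

section
/- Let G be a group acting on sets V and V' by automorphisms of simple graphs Γ on V and Γ' on V' respectively, with Γ connected. Let ρ : V → V' be a G-equivariant map such that for every edge (u,v) of Γ, either ρ(u) = ρ(v) or (ρ(u), ρ(v)) is an edge of Γ', and let σ : V' → V be a G-equivariant map with ρ ∘ σ = id_{V'}. Suppose the edge set of Γ' has only finitely many orbits under the induced G-action. Then there exists L ∈ ℕ such that for all ū, v̄ ∈ V': ū and v̄ lie in the same connected component of Γ', and d_{Γ'}(ū, v̄) ≤ d_Γ(σ(ū), σ(v̄)) ≤ L · d_{Γ'}(ū, v̄), where d_Γ and d_{Γ'} denote graph distance. In particular σ is a quasi-isometric embedding. -/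
private lemma pushWalk {V V' : Type*} {Γ : SimpleGraph V} {Γ' : SimpleGraph V'}
    {ρ : V → V'} (hρedge : ∀ u v : V, Γ.Adj u v → ρ u = ρ v ∨ Γ'.Adj (ρ u) (ρ v))
    {u v : V} (w : Γ.Walk u v) :
    ∃ w' : Γ'.Walk (ρ u) (ρ v), w'.length ≤ w.length := by
  induction w with
  | nil => exact ⟨SimpleGraph.Walk.nil, le_refl _⟩
  | cons h p ih =>
    obtain ⟨w', hw'⟩ := ih
    rcases hρedge _ _ h with heq | hadj
    · exact ⟨w'.copy heq.symm rfl, by simpa using hw'.trans (Nat.le_succ _)⟩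
    · exact ⟨SimpleGraph.Walk.cons hadj w', by simpa using hw'⟩

/-- Let `G` act by automorphisms on simple graphs `Γ` (connected) and `Γ'`, let
`ρ` be a `G`-equivariant map sending edges to edges or vertices, and let `σ` be
a `G`-equivariant section of `ρ`.  If the edge set of `Γ'` has finitely many
`G`-orbits, then `σ` is a quasi-isometric embedding: there is `L` with
`d_{Γ'}(ū, v̄) ≤ d_Γ(σ ū, σ v̄) ≤ L * d_{Γ'}(ū, v̄)` for all `ū, v̄`. -/
theorem equivariant_section_qi_embedding
    {G V V' : Type*} [Group G] [MulAction G V] [MulAction G V']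
    (Γ : SimpleGraph V) (Γ' : SimpleGraph V')
    (haut : ∀ (g : G) (u v : V), Γ.Adj u v → Γ.Adj (g • u) (g • v))
    (haut' : ∀ (g : G) (u v : V'), Γ'.Adj u v → Γ'.Adj (g • u) (g • v))
    (hconn : Γ.Connected)
    (ρ : V → V') (σ : V' → V)
    (hρequiv : ∀ (g : G) (u : V), ρ (g • u) = g • ρ u)
    (hρedge : ∀ u v : V, Γ.Adj u v → ρ u = ρ v ∨ Γ'.Adj (ρ u) (ρ v))
    (hσequiv : ∀ (g : G) (u : V'), σ (g • u) = g • σ u)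
    (hsection : ∀ u : V', ρ (σ u) = u)
    (horbits : ∃ s : Finset (V' × V'), ∀ u v : V', Γ'.Adj u v →
      ∃ p ∈ s, ∃ g : G, (g • p.1 = u ∧ g • p.2 = v) ∨ (g • p.1 = v ∧ g • p.2 = u)) :
    ∃ L : ℕ, ∀ u v : V', Γ'.Reachable u v ∧
      Γ'.dist u v ≤ Γ.dist (σ u) (σ v) ∧
      Γ.dist (σ u) (σ v) ≤ L * Γ'.dist u v := by
  obtain ⟨s, hs⟩ := horbits
  -- reachability in Γ' for any pair
  have hreach : ∀ u v : V', Γ'.Reachable u v := by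
    intro u v
    obtain ⟨w⟩ := hconn (σ u) (σ v)
    obtain ⟨w', -⟩ := pushWalk hρedge (ρ := ρ) w
    rw [hsection, hsection] at w'
    exact ⟨w'⟩
  -- lower bound
  have hlow : ∀ u v : V', Γ'.dist u v ≤ Γ.dist (σ u) (σ v) := by
    intro u v
    obtain ⟨w, hw⟩ := (hconn (σ u) (σ v)).exists_walk_length_eq_dist
    obtain ⟨w', hw'⟩ := pushWalk hρedge (ρ := ρ) w
    calc Γ'.dist u v ≤ (w'.copy (hsection u) (hsection v)).length :=
          SimpleGraph.dist_le _
    _ = w'.length := SimpleGraph.Walk.length_copy _ _ _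
    _ ≤ w.length := hw'
    _ = _ := hw
  -- distance in Γ is G-invariant
  have hdist_le : ∀ (g : G) (u v : V), Γ.dist (g • u) (g • v) ≤ Γ.dist u v := by
    intro g u v
    obtain ⟨w, hw⟩ := (hconn u v).exists_walk_length_eq_dist
    have := SimpleGraph.dist_le (w.map ⟨fun x => g • x, fun h => haut g _ _ h⟩)
    rw [SimpleGraph.Walk.length_map, hw] at this
    exact this
  have hdist_smul : ∀ (g : G) (u v : V), Γ.dist (g • u) (g • v) = Γ.dist u v := by
    intro g u v
    refine le_antisymm (hdist_le g u v) ?_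
    have := hdist_le g⁻¹ (g • u) (g • v)
    simpa using this
  set L : ℕ := s.sup fun p => Γ.dist (σ p.1) (σ p.2) with hL
  -- edge bound
  have hedge : ∀ u v : V', Γ'.Adj u v → Γ.dist (σ u) (σ v) ≤ L := by
    intro u v h
    obtain ⟨p, hp, g, hg⟩ := hs u v h
    have hb : Γ.dist (σ p.1) (σ p.2) ≤ L := hL ▸ Finset.le_sup (f := fun q => Γ.dist (σ q.1) (σ q.2)) hp
    rcases hg with ⟨h1, h2⟩ | ⟨h1, h2⟩
    · rw [← h1, ← h2, hσequiv, hσequiv, hdist_smul] at *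
      exact hb
    · rw [← h1, ← h2, hσequiv, hσequiv] at *
      rw [SimpleGraph.dist_comm, hdist_smul]
      exact hb
  refine ⟨L, fun u v => ⟨hreach u v, hlow u v, ?_⟩⟩
  obtain ⟨w, hw⟩ := (hreach u v).exists_walk_length_eq_dist
  rw [← hw]
  clear hw
  induction w with
  | nil => simp
  | @cons a b c h p ih =>
    calc Γ.dist (σ a) (σ c) ≤ Γ.dist (σ a) (σ b) + Γ.dist (σ b) (σ c) :=
          hconn.dist_triangle
    _ ≤ L + L * p.length := Nat.add_le_add (hedge a b h) ih
    _ = L * (SimpleGraph.Walk.cons h p).length := by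
          simp only [SimpleGraph.Walk.length_cons]
          ring
end
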